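/- Let C ⇄ A ⇄ H (with maps j, p, i, π) be a weak m-Hom admissible mapping system, with (C ♯_σ^× H, β ⊗ α) the Radford [(m,k),m]-biproduct monoidal Hom-bialgebra and (A, γ) a monoidal Hom-bialgebra. Then the map g: A → C ♯_σ^× H, g(a) = β(p(a₁)) ⊗ α(π(a₂)), is a homomorphism of monoidal Hom-coalgebras: Δ_{C ♯_σ^× H}(g(a)) = (g ⊗ g)Δ_A(a) and ε(g(a)) = ε_A(a) for all a ∈ A, and g∘γ = (β ⊗ α)∘g. -/

import Mathlib

open TensorProduct

noncomputable section

/-- A monoidal Hom-algebra `(A, β)`. -/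
structure HomAlgebraStr (K : Type*) (A : Type*) [Field K] [AddCommGroup A] [Module K A] where
  mul : A →ₗ[K] A →ₗ[K] A
  one : A
  str : A ≃ₗ[K] A
  hom_assoc : ∀ a b c : A, mul (str a) (mul b c) = mul (mul a b) (str c)
  str_mul : ∀ a b : A, str (mul a b) = mul (str a) (str b)
  mul_one : ∀ a : A, mul a one = str a
  one_mul : ∀ a : A, mul one a = str a
  str_one : str one = one

/-- A monoidal Hom-coalgebra `(C, γ)`. -/
structure HomCoalgebraStr (K : Type*) (C : Type*) [Field K] [AddCommGroup C] [Module K C] where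
  comul : C →ₗ[K] C ⊗[K] C
  counit : C →ₗ[K] K
  str : C ≃ₗ[K] C
  hom_coassoc : ∀ c : C,
    TensorProduct.map str.symm.toLinearMap comul (comul c)
      = TensorProduct.assoc K C C C (TensorProduct.map comul str.symm.toLinearMap (comul c))
  comul_str : ∀ c : C, comul (str c) = TensorProduct.map str.toLinearMap str.toLinearMap (comul c)
  counit_comul_left : ∀ c : C,
    TensorProduct.lid K C (TensorProduct.map counit (LinearMap.id : C →ₗ[K] C) (comul c)) = str.symm c
  counit_comul_right : ∀ c : C,
    TensorProduct.rid K C (TensorProduct.map (LinearMap.id : C →ₗ[K] C) counit (comul c)) = str.symm c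
  counit_str : ∀ c : C, counit (str c) = counit c

/-- The componentwise multiplication on `N ⊗ N` induced by a bilinear multiplication on `N`. -/
def tensorSquareMul {K N : Type*} [Field K] [AddCommGroup N] [Module K N]
    (mul : N →ₗ[K] N →ₗ[K] N) :
    (N ⊗[K] N) →ₗ[K] (N ⊗[K] N) →ₗ[K] (N ⊗[K] N) :=
  TensorProduct.curry
    ((TensorProduct.map (TensorProduct.lift mul) (TensorProduct.lift mul)) ∘ₗ
      (TensorProduct.tensorTensorTensorComm K N N N N).toLinearMap)

/-- A monoidal Hom-bialgebra `(H, α)`. -/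
structure HomBialgebraStr (K : Type*) (H : Type*) [Field K] [AddCommGroup H] [Module K H]
    extends HomAlgebraStr K H where
  comul : H →ₗ[K] H ⊗[K] H
  counit : H →ₗ[K] K
  hom_coassoc : ∀ c : H,
    TensorProduct.map str.symm.toLinearMap comul (comul c)
      = TensorProduct.assoc K H H H (TensorProduct.map comul str.symm.toLinearMap (comul c))
  comul_str : ∀ c : H, comul (str c) = TensorProduct.map str.toLinearMap str.toLinearMap (comul c)
  counit_comul_left : ∀ c : H,
    TensorProduct.lid K H (TensorProduct.map counit (LinearMap.id : H →ₗ[K] H) (comul c)) = str.symm c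
  counit_comul_right : ∀ c : H,
    TensorProduct.rid K H (TensorProduct.map (LinearMap.id : H →ₗ[K] H) counit (comul c)) = str.symm c
  counit_str : ∀ c : H, counit (str c) = counit c
  comul_mul : ∀ a b : H, comul (mul a b) = tensorSquareMul mul (comul a) (comul b)
  comul_one : comul one = one ⊗ₜ[K] one
  counit_mul : ∀ a b : H, counit (mul a b) = counit a * counit b
  counit_one : counit one = 1

/-- A monoidal Hom-Hopf algebra `(H, α, S)`. -/
structure HomHopfStr (K : Type*) (H : Type*) [Field K] [AddCommGroup H] [Module K H]
    extends HomBialgebraStr K H where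
  antipode : H →ₗ[K] H
  antipode_str : ∀ h : H, antipode (str h) = str (antipode h)
  antipode_mul_left : ∀ h : H,
    TensorProduct.lift (mul ∘ₗ antipode) (comul h) = counit h • one
  antipode_mul_right : ∀ h : H,
    TensorProduct.lift (mul.compl₂ antipode) (comul h) = counit h • one

section Defs

variable {K H A C M : Type*} [Field K]
variable [AddCommGroup H] [Module K H] [AddCommGroup A] [Module K A]
variable [AddCommGroup C] [Module K C] [AddCommGroup M] [Module K M]

/-- `(A, β)` is a left weak `(H, α)`-Hom-module algebra via `act`:
`h·(ab) = (h₁·a)(h₂·b)` and `h·1 = ε(h)1`. -/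
structure IsWeakModuleAlgebra (HB : HomBialgebraStr K H) (AA : HomAlgebraStr K A)
    (act : H →ₗ[K] A →ₗ[K] A) : Prop where
  act_mul : ∀ (h : H) (a b : A),
    act h (AA.mul a b)
      = TensorProduct.lift AA.mul
          (TensorProduct.map (TensorProduct.lift act) (TensorProduct.lift act)
            (TensorProduct.map ((TensorProduct.mk K H A).flip a) ((TensorProduct.mk K H A).flip b)
              (HB.comul h)))
  act_one : ∀ h : H, act h AA.one = HB.counit h • AA.one

/-- `(C, β)` is a left `(H, α)`-Hom-comodule coalgebra via `coact a = a₍₋₁₎ ⊗ a₍₀₎`. -/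
structure IsComoduleCoalgebra (HB : HomBialgebraStr K H) (CC : HomCoalgebraStr K C)
    (coact : C →ₗ[K] H ⊗[K] C) : Prop where
  comodule_coassoc : ∀ c : C,
    TensorProduct.assoc K H H C
        (TensorProduct.map HB.comul CC.str.symm.toLinearMap (coact c))
      = TensorProduct.map HB.str.symm.toLinearMap coact (coact c)
  coact_str : ∀ c : C,
    coact (CC.str c) = TensorProduct.map HB.str.toLinearMap CC.str.toLinearMap (coact c)
  counit_coact : ∀ c : C,
    TensorProduct.lid K C (TensorProduct.map HB.counit (LinearMap.id : C →ₗ[K] C) (coact c))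
      = CC.str.symm c
  coact_comul : ∀ c : C,
    TensorProduct.map (LinearMap.id : H →ₗ[K] H) CC.comul (coact c)
      = TensorProduct.map (TensorProduct.lift HB.mul) (LinearMap.id : C ⊗[K] C →ₗ[K] C ⊗[K] C)
          (TensorProduct.tensorTensorTensorComm K H C H C
            (TensorProduct.map coact coact (CC.comul c)))
  counit_coact_one : ∀ c : C,
    TensorProduct.rid K H (TensorProduct.map (LinearMap.id : H →ₗ[K] H) CC.counit (coact c))
      = CC.counit c • HB.one

/-- The `(m,k)`-Hom-crossed product multiplication on simple tensors:
`(a ♯ h)(b ♯ g) = a[(α^m(h₁₁)·β⁻²(b)) σ(α^{k+1}(h₁₂), α^k(g₁))] ♯ α(h₂g₂)`. -/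
def cpMulElem (HB : HomBialgebraStr K H) (AA : HomAlgebraStr K A)
    (act : H →ₗ[K] A →ₗ[K] A) (σ : H →ₗ[K] H →ₗ[K] A) (m k : ℤ)
    (a : A) (h : H) (b : A) (g : H) : A ⊗[K] H :=
  TensorProduct.map
    ((AA.mul a) ∘ₗ TensorProduct.lift AA.mul ∘ₗ
      TensorProduct.map
        ((act.flip ((AA.str ^ (-2 : ℤ)) b)) ∘ₗ (HB.str ^ m).toLinearMap)
        (TensorProduct.lift σ ∘ₗ
          TensorProduct.map (HB.str ^ (k+1)).toLinearMap (HB.str ^ k).toLinearMap) ∘ₗ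
      (TensorProduct.assoc K H H H).toLinearMap)
    (HB.str.toLinearMap ∘ₗ TensorProduct.lift HB.mul)
    (TensorProduct.map (TensorProduct.map HB.comul (LinearMap.id : H →ₗ[K] H))
      (LinearMap.id : H ⊗[K] H →ₗ[K] H ⊗[K] H)
      (TensorProduct.tensorTensorTensorComm K H H H H (HB.comul h ⊗ₜ[K] HB.comul g)))

/-- The `m`-Hom-smash product multiplication on simple tensors:
`(a ♯ h)(b ♯ g) = a(α^m(h₁)·β⁻¹(b)) ♯ α(h₂)g`. -/
def smashMulElem (HB : HomBialgebraStr K H) (AA : HomAlgebraStr K A)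
    (act : H →ₗ[K] A →ₗ[K] A) (m : ℤ) (a : A) (h : H) (b : A) (g : H) : A ⊗[K] H :=
  TensorProduct.map
    ((AA.mul a) ∘ₗ (act.flip ((AA.str ^ (-1 : ℤ)) b)) ∘ₗ (HB.str ^ m).toLinearMap)
    ((HB.mul.flip g) ∘ₗ HB.str.toLinearMap)
    (HB.comul h)

/-- The `m`-Hom-smash coproduct comultiplication on simple tensors:
`Δ(a ⋊ h) = (a₁ ⋊ α^m(a₂₍₋₁₎)α⁻¹(h₁)) ⊗ (β(a₂₍₀₎) ⋊ h₂)`. -/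
def scComulElem (HB : HomBialgebraStr K H) (AC : HomCoalgebraStr K A)
    (coact : A →ₗ[K] H ⊗[K] A) (m : ℤ) (a : A) (h : H) :
    (A ⊗[K] H) ⊗[K] (A ⊗[K] H) :=
  TensorProduct.map
    (TensorProduct.map (LinearMap.id : A →ₗ[K] A)
        (TensorProduct.lift HB.mul ∘ₗ
          TensorProduct.map (HB.str ^ m).toLinearMap (HB.str ^ (-1 : ℤ)).toLinearMap) ∘ₗ
      (TensorProduct.assoc K A H H).toLinearMap)
    (TensorProduct.map AC.str.toLinearMap (LinearMap.id : H →ₗ[K] H))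
    (TensorProduct.tensorTensorTensorComm K (A ⊗[K] H) A H H
      ((TensorProduct.assoc K A H A).symm
          (TensorProduct.map (LinearMap.id : A →ₗ[K] A) coact (AC.comul a)) ⊗ₜ[K] HB.comul h))

/-- Condition (1) of Theorem 2.3. -/
def CPCond1 (HB : HomBialgebraStr K H) (AA : HomAlgebraStr K A)
    (σ : H →ₗ[K] H →ₗ[K] A) : Prop :=
  (∀ h : H, σ h HB.one = HB.counit h • AA.one) ∧
  (∀ h : H, σ HB.one h = HB.counit h • AA.one) ∧
  (∀ h g : H, σ (HB.str h) (HB.str g) = AA.str (σ h g))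

/-- Condition (2) of Theorem 2.3:
`[α^m(h₁l₁)·a] σ(α^{k+2}(h₂), α^{k+2}(l₂)) = σ(α^{k+2}(h₁), α^{k+2}(l₁)) [α^m(h₂l₂)·a]`. -/
def CPCond2 (HB : HomBialgebraStr K H) (AA : HomAlgebraStr K A)
    (act : H →ₗ[K] A →ₗ[K] A) (σ : H →ₗ[K] H →ₗ[K] A) (m k : ℤ) : Prop :=
  ∀ (h l : H) (a : A),
    TensorProduct.lift AA.mul
      (TensorProduct.map
        ((act.flip a) ∘ₗ (HB.str ^ m).toLinearMap ∘ₗ TensorProduct.lift HB.mul)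
        (TensorProduct.lift σ ∘ₗ
          TensorProduct.map (HB.str ^ (k+2)).toLinearMap (HB.str ^ (k+2)).toLinearMap)
        (TensorProduct.tensorTensorTensorComm K H H H H (HB.comul h ⊗ₜ[K] HB.comul l)))
    =
    TensorProduct.lift AA.mul
      (TensorProduct.map
        (TensorProduct.lift σ ∘ₗ
          TensorProduct.map (HB.str ^ (k+2)).toLinearMap (HB.str ^ (k+2)).toLinearMap)
        ((act.flip a) ∘ₗ (HB.str ^ m).toLinearMap ∘ₗ TensorProduct.lift HB.mul)
        (TensorProduct.tensorTensorTensorComm K H H H H (HB.comul h ⊗ₜ[K] HB.comul l)))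

/-- Condition (3) of Theorem 2.3:
`[α^{m+1}(h₁)·σ(α^{k+1}(l₁), α^{k+1}(g₁))] σ(α^{k+2}(h₂), α^{k+1}(l₂g₂))
  = σ(α^{k+2}(h₁), α^{k+2}(l₁)) σ(α^{k+1}(h₂l₂), α^{k+1}(g))`. -/
def CPCond3 (HB : HomBialgebraStr K H) (AA : HomAlgebraStr K A)
    (act : H →ₗ[K] A →ₗ[K] A) (σ : H →ₗ[K] H →ₗ[K] A) (m k : ℤ) : Prop :=
  ∀ h l g : H,
    TensorProduct.lift AA.mul
      (TensorProduct.map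
        (TensorProduct.lift act ∘ₗ
          TensorProduct.map (HB.str ^ (m+1)).toLinearMap
            (TensorProduct.lift σ ∘ₗ
              TensorProduct.map (HB.str ^ (k+1)).toLinearMap (HB.str ^ (k+1)).toLinearMap))
        (TensorProduct.lift σ ∘ₗ
          TensorProduct.map (HB.str ^ (k+2)).toLinearMap
            ((HB.str ^ (k+1)).toLinearMap ∘ₗ TensorProduct.lift HB.mul))
        (TensorProduct.tensorTensorTensorComm K H H (H ⊗[K] H) (H ⊗[K] H)
          (HB.comul h ⊗ₜ[K]
            (TensorProduct.tensorTensorTensorComm K H H H H (HB.comul l ⊗ₜ[K] HB.comul g)))))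
    =
    TensorProduct.lift AA.mul
      (TensorProduct.map
        (TensorProduct.lift σ ∘ₗ
          TensorProduct.map (HB.str ^ (k+2)).toLinearMap (HB.str ^ (k+2)).toLinearMap)
        ((σ.flip ((HB.str ^ (k+1)) g)) ∘ₗ (HB.str ^ (k+1)).toLinearMap ∘ₗ TensorProduct.lift HB.mul)
        (TensorProduct.tensorTensorTensorComm K H H H H (HB.comul h ⊗ₜ[K] HB.comul l)))

/-- `σ` is a twisted comodule cocycle:
`β(a₁) ⊗ α^{m+1}(a₂₍₋₁₎)g ⊗ a₂₍₀₎
  = a₁σ(α^{k+m+2}(a₂₍₋₁₎₁), α^{k+1}(g₁)) ⊗ α^{m+2}(a₂₍₋₁₎₂)α(g₂) ⊗ a₂₍₀₎`. -/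
def IsTwistedCocycle (HB : HomBialgebraStr K H) (AA : HomAlgebraStr K A)
    (AC : HomCoalgebraStr K A) (coact : A →ₗ[K] H ⊗[K] A)
    (σ : H →ₗ[K] H →ₗ[K] A) (m k : ℤ) : Prop :=
  ∀ (a : A) (g : H),
    (TensorProduct.assoc K A H A).symm
      (TensorProduct.map AA.str.toLinearMap
        (TensorProduct.map ((HB.mul.flip g) ∘ₗ (HB.str ^ (m+1)).toLinearMap)
          (LinearMap.id : A →ₗ[K] A))
        (TensorProduct.map (LinearMap.id : A →ₗ[K] A) coact (AC.comul a)))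
    =
    TensorProduct.map
      (TensorProduct.map (TensorProduct.lift AA.mul) (LinearMap.id : H →ₗ[K] H)
        ∘ₗ (TensorProduct.assoc K A A H).symm.toLinearMap
        ∘ₗ TensorProduct.map (LinearMap.id : A →ₗ[K] A)
            (TensorProduct.map
              (TensorProduct.lift σ ∘ₗ
                TensorProduct.map (HB.str ^ (k+m+2)).toLinearMap (HB.str ^ (k+1)).toLinearMap)
              (TensorProduct.lift HB.mul ∘ₗ
                TensorProduct.map (HB.str ^ (m+2)).toLinearMap HB.str.toLinearMap)
            ∘ₗ (TensorProduct.tensorTensorTensorComm K H H H H).toLinearMap)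
        ∘ₗ (TensorProduct.assoc K A (H ⊗[K] H) (H ⊗[K] H)).toLinearMap)
      (LinearMap.id : A →ₗ[K] A)
      ((TensorProduct.assoc K (A ⊗[K] (H ⊗[K] H)) (H ⊗[K] H) A).symm
        (TensorProduct.map (LinearMap.id : A ⊗[K] (H ⊗[K] H) →ₗ[K] A ⊗[K] (H ⊗[K] H))
          (TensorProduct.comm K A (H ⊗[K] H)).toLinearMap
          (TensorProduct.assoc K (A ⊗[K] (H ⊗[K] H)) A (H ⊗[K] H)
            ((TensorProduct.assoc K A (H ⊗[K] H) A).symm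
                (TensorProduct.map (LinearMap.id : A →ₗ[K] A)
                  (TensorProduct.map HB.comul (LinearMap.id : A →ₗ[K] A))
                  (TensorProduct.map (LinearMap.id : A →ₗ[K] A) coact (AC.comul a)))
              ⊗ₜ[K] HB.comul g))))

/-- Auxiliary map `(n ⊗ w) ⊗ t ↦ (α^j(n)·t) ⊗ f(w)` on `(H ⊗ M) ⊗ H`. -/
def coactMulAux (HB : HomBialgebraStr K H) (j : ℤ) (f : M →ₗ[K] M) :
    (H ⊗[K] M) ⊗[K] H →ₗ[K] H ⊗[K] M :=
  TensorProduct.map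
      (TensorProduct.lift HB.mul ∘ₗ
        TensorProduct.map (HB.str ^ j).toLinearMap (LinearMap.id : H →ₗ[K] H)) f
    ∘ₗ (TensorProduct.assoc K H H M).symm.toLinearMap
    ∘ₗ TensorProduct.map (LinearMap.id : H →ₗ[K] H) (TensorProduct.comm K M H).toLinearMap
    ∘ₗ (TensorProduct.assoc K H M H).toLinearMap

/-- (A1): `ε_A` is an algebra map. -/
def CondA1 (AA : HomAlgebraStr K A) (AC : HomCoalgebraStr K A) : Prop :=
  (∀ a b : A, AC.counit (AA.mul a b) = AC.counit a * AC.counit b) ∧ AC.counit AA.one = 1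

/-- (A2): `ε_A(h·a) = ε_H(h)ε_A(a)`. -/
def CondA2 (HB : HomBialgebraStr K H) (AC : HomCoalgebraStr K A)
    (act : H →ₗ[K] A →ₗ[K] A) : Prop :=
  ∀ (h : H) (a : A), AC.counit (act h a) = HB.counit h * AC.counit a

/-- (A3): `σ` is a coalgebra map. -/
def CondA3 (HB : HomBialgebraStr K H) (AC : HomCoalgebraStr K A)
    (σ : H →ₗ[K] H →ₗ[K] A) : Prop :=
  (∀ h g : H,
    AC.comul (σ h g)
      = TensorProduct.map (TensorProduct.lift σ) (TensorProduct.lift σ)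
          (TensorProduct.tensorTensorTensorComm K H H H H (HB.comul h ⊗ₜ[K] HB.comul g))) ∧
  (∀ h g : H, AC.counit (σ h g) = HB.counit h * HB.counit g)

/-- (A4): `Δ_A(1_A) = 1_A ⊗ 1_A`. -/
def CondA4 (AA : HomAlgebraStr K A) (AC : HomCoalgebraStr K A) : Prop :=
  AC.comul AA.one = AA.one ⊗ₜ[K] AA.one

/-- (A5): the coaction is an algebra map. -/
def CondA5 (HB : HomBialgebraStr K H) (AA : HomAlgebraStr K A)
    (coact : A →ₗ[K] H ⊗[K] A) : Prop :=
  (∀ a b : A,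
    coact (AA.mul a b)
      = TensorProduct.map (TensorProduct.lift HB.mul) (TensorProduct.lift AA.mul)
          (TensorProduct.tensorTensorTensorComm K H A H A (coact a ⊗ₜ[K] coact b))) ∧
  coact AA.one = HB.one ⊗ₜ[K] AA.one

/-- (A6). -/
def CondA6 (HB : HomBialgebraStr K H) (coact : A →ₗ[K] H ⊗[K] A)
    (σ : H →ₗ[K] H →ₗ[K] A) (m k : ℤ) : Prop :=
  ∀ h g : H,
    coactMulAux HB (m-1) (LinearMap.id : A →ₗ[K] A)
      (TensorProduct.map
        (coact ∘ₗ TensorProduct.lift σ ∘ₗ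
          TensorProduct.map (HB.str ^ (k+2)).toLinearMap (HB.str ^ (k+2)).toLinearMap)
        ((HB.str ^ (-1 : ℤ)).toLinearMap ∘ₗ TensorProduct.lift HB.mul)
        (TensorProduct.tensorTensorTensorComm K H H H H (HB.comul h ⊗ₜ[K] HB.comul g)))
    =
    TensorProduct.map (TensorProduct.lift HB.mul)
      (TensorProduct.lift σ ∘ₗ
        TensorProduct.map (HB.str ^ (k+1)).toLinearMap (HB.str ^ (k+1)).toLinearMap)
      (TensorProduct.tensorTensorTensorComm K H H H H (HB.comul h ⊗ₜ[K] HB.comul g))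

/-- (A7). -/
def CondA7 (HB : HomBialgebraStr K H) (AA : HomAlgebraStr K A) (AC : HomCoalgebraStr K A)
    (act : H →ₗ[K] A →ₗ[K] A) (coact : A →ₗ[K] H ⊗[K] A)
    (σ : H →ₗ[K] H →ₗ[K] A) (m k : ℤ) : Prop :=
  ∀ a b : A,
    AC.comul (AA.mul a b) =
      TensorProduct.map
        (TensorProduct.lift AA.mul
          ∘ₗ TensorProduct.map (LinearMap.id : A →ₗ[K] A)
              (TensorProduct.lift AA.mul
                ∘ₗ TensorProduct.map
                    (TensorProduct.lift act ∘ₗ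
                      TensorProduct.map (HB.str ^ (2*m)).toLinearMap (AA.str ^ (-2 : ℤ)).toLinearMap)
                    (TensorProduct.lift σ ∘ₗ
                      TensorProduct.map (HB.str ^ (k+m+1)).toLinearMap (HB.str ^ (k+m)).toLinearMap)
                ∘ₗ (TensorProduct.tensorTensorTensorComm K H H A H).toLinearMap)
          ∘ₗ (TensorProduct.assoc K A (H ⊗[K] H) (A ⊗[K] H)).toLinearMap)
        (AA.str.toLinearMap ∘ₗ TensorProduct.lift AA.mul)
        (TensorProduct.tensorTensorTensorComm K (A ⊗[K] (H ⊗[K] H)) A (A ⊗[K] H) A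
          ((TensorProduct.assoc K A (H ⊗[K] H) A).symm
              (TensorProduct.map (LinearMap.id : A →ₗ[K] A)
                (TensorProduct.map HB.comul (LinearMap.id : A →ₗ[K] A))
                (TensorProduct.map (LinearMap.id : A →ₗ[K] A) coact (AC.comul a)))
            ⊗ₜ[K]
            (TensorProduct.assoc K A H A).symm
              (TensorProduct.map (LinearMap.id : A →ₗ[K] A) coact (AC.comul b))))

/-- (A8). -/
def CondA8 (HB : HomBialgebraStr K H) (AA : HomAlgebraStr K A) (AC : HomCoalgebraStr K A)
    (act : H →ₗ[K] A →ₗ[K] A) (coact : A →ₗ[K] H ⊗[K] A)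
    (σ : H →ₗ[K] H →ₗ[K] A) (m k : ℤ) : Prop :=
  ∀ (h : H) (b : A),
    AC.comul (act ((HB.str ^ m) h) b) =
      TensorProduct.map
        (TensorProduct.lift AA.mul
          ∘ₗ TensorProduct.map
              (TensorProduct.lift act ∘ₗ
                TensorProduct.map (HB.str ^ m).toLinearMap (AA.str ^ (-1 : ℤ)).toLinearMap)
              (TensorProduct.lift σ ∘ₗ
                TensorProduct.map (HB.str ^ (k+1)).toLinearMap (HB.str ^ (k+m+1)).toLinearMap)
          ∘ₗ (TensorProduct.tensorTensorTensorComm K H H A H).toLinearMap)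
        (TensorProduct.lift act ∘ₗ
          TensorProduct.map (HB.str ^ m).toLinearMap AA.str.toLinearMap)
        (TensorProduct.tensorTensorTensorComm K (H ⊗[K] H) H (A ⊗[K] H) A
          (TensorProduct.map HB.comul (LinearMap.id : H →ₗ[K] H) (HB.comul h)
            ⊗ₜ[K]
            (TensorProduct.assoc K A H A).symm
              (TensorProduct.map (LinearMap.id : A →ₗ[K] A) coact (AC.comul b))))

/-- (A9). -/
def CondA9 (HB : HomBialgebraStr K H) (act : H →ₗ[K] A →ₗ[K] A)
    (coact : A →ₗ[K] H ⊗[K] A) (m : ℤ) : Prop :=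
  ∀ (h : H) (b : A),
    coactMulAux HB (m-1) (LinearMap.id : A →ₗ[K] A)
      (TensorProduct.map (coact ∘ₗ (act.flip b) ∘ₗ (HB.str ^ (m+1)).toLinearMap)
        (LinearMap.id : H →ₗ[K] H) (HB.comul h))
    =
    TensorProduct.map
      (TensorProduct.lift HB.mul ∘ₗ
        TensorProduct.map (LinearMap.id : H →ₗ[K] H) (HB.str ^ m).toLinearMap)
      (TensorProduct.lift act ∘ₗ
        TensorProduct.map (HB.str ^ m).toLinearMap (LinearMap.id : A →ₗ[K] A))
      (TensorProduct.tensorTensorTensorComm K H H H A (HB.comul h ⊗ₜ[K] coact b))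

/-- The Radford `[(m,k),m]`-biproduct structure on `A ⊗ H`. -/
structure IsRadfordBiproduct (HB : HomBialgebraStr K H) (AA : HomAlgebraStr K A)
    (AC : HomCoalgebraStr K A) (act : H →ₗ[K] A →ₗ[K] A) (coact : A →ₗ[K] H ⊗[K] A)
    (σ : H →ₗ[K] H →ₗ[K] A) (m k : ℤ) (B : HomBialgebraStr K (A ⊗[K] H)) : Prop where
  mul_def : ∀ (a : A) (h : H) (b : A) (g : H),
    B.mul (a ⊗ₜ[K] h) (b ⊗ₜ[K] g) = cpMulElem HB AA act σ m k a h b g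
  one_def : B.one = AA.one ⊗ₜ[K] HB.one
  comul_def : ∀ (a : A) (h : H), B.comul (a ⊗ₜ[K] h) = scComulElem HB AC coact m a h
  counit_def : ∀ (a : A) (h : H), B.counit (a ⊗ₜ[K] h) = AC.counit a * HB.counit h
  str_def : B.str = TensorProduct.congr AA.str HB.str

/-- `S_H` is a `σ`-antipode for `(H, α)`. -/
structure IsSigmaAntipode (HB : HomBialgebraStr K H) (AA : HomAlgebraStr K A)
    (σ : H →ₗ[K] H →ₗ[K] A) (S : H →ₗ[K] H) : Prop where
  antipode_str : ∀ h : H, S (HB.str h) = HB.str (S h)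
  right : ∀ h : H,
    TensorProduct.map (TensorProduct.lift σ) (TensorProduct.lift HB.mul)
        (TensorProduct.tensorTensorTensorComm K H H H H
          (TensorProduct.map HB.comul (HB.comul ∘ₗ S) (HB.comul h)))
      = HB.counit h • (AA.one ⊗ₜ[K] HB.one)
  left : ∀ h : H,
    TensorProduct.map (TensorProduct.lift σ) (TensorProduct.lift HB.mul)
        (TensorProduct.tensorTensorTensorComm K H H H H
          (TensorProduct.map (HB.comul ∘ₗ S) HB.comul (HB.comul h)))
      = HB.counit h • (AA.one ⊗ₜ[K] HB.one)

/-- `S_A` is a convolution inverse of `id_A`. -/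
def IsConvInvOfId (AA : HomAlgebraStr K A) (AC : HomCoalgebraStr K A)
    (SA : A →ₗ[K] A) : Prop :=
  (∀ a : A, TensorProduct.lift (AA.mul ∘ₗ SA) (AC.comul a) = AC.counit a • AA.one) ∧
  (∀ a : A, TensorProduct.lift (AA.mul.compl₂ SA) (AC.comul a) = AC.counit a • AA.one)

/-- `σ` and `σinv` are convolution inverses of each other. -/
def IsConvInvPair (HB : HomBialgebraStr K H) (AA : HomAlgebraStr K A)
    (σ σinv : H →ₗ[K] H →ₗ[K] A) : Prop :=
  (∀ h g : H,
    TensorProduct.lift AA.mul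
      (TensorProduct.map (TensorProduct.lift σ) (TensorProduct.lift σinv)
        (TensorProduct.tensorTensorTensorComm K H H H H (HB.comul h ⊗ₜ[K] HB.comul g)))
    = (HB.counit h * HB.counit g) • AA.one) ∧
  (∀ h g : H,
    TensorProduct.lift AA.mul
      (TensorProduct.map (TensorProduct.lift σinv) (TensorProduct.lift σ)
        (TensorProduct.tensorTensorTensorComm K H H H H (HB.comul h ⊗ₜ[K] HB.comul g)))
    = (HB.counit h * HB.counit g) • AA.one)

/-- The Radford antipode formula
`S(a ⊗ h) = (1_A ⊗ S_H(α^{m−1}(a₍₋₁₎)α⁻²(h)))·(S_A(a₍₀₎) ⊗ 1_H)`. -/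
def radfordAntipodeElem (HB : HomBialgebraStr K H) (AA : HomAlgebraStr K A)
    (coact : A →ₗ[K] H ⊗[K] A)
    (Bmul : (A ⊗[K] H) →ₗ[K] (A ⊗[K] H) →ₗ[K] (A ⊗[K] H))
    (SH : H →ₗ[K] H) (SA : A →ₗ[K] A) (m : ℤ) (a : A) (h : H) : A ⊗[K] H :=
  TensorProduct.lift Bmul
    (TensorProduct.map
      ((TensorProduct.mk K A H AA.one) ∘ₗ SH ∘ₗ (HB.mul.flip ((HB.str ^ (-2 : ℤ)) h)) ∘ₗ
        (HB.str ^ (m - 1)).toLinearMap)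
      (((TensorProduct.mk K A H).flip HB.one) ∘ₗ SA)
      (coact a))

/-- `φ^l(l ⊗ (a ⊗ h)) = (α(l₁₁)·β⁻¹(a)) σ(α^{k+2−m}(l₁₂), α^{k+1}(h₁)) ⊗ α^{1−m}(l₂)α(h₂)`. -/
def philElem (HB : HomBialgebraStr K H) (AA : HomAlgebraStr K A)
    (act : H →ₗ[K] A →ₗ[K] A) (σ : H →ₗ[K] H →ₗ[K] A) (m k : ℤ)
    (l : H) (a : A) (h : H) : A ⊗[K] H :=
  TensorProduct.map
    (TensorProduct.lift AA.mul ∘ₗ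
      TensorProduct.map ((act.flip ((AA.str ^ (-1 : ℤ)) a)) ∘ₗ HB.str.toLinearMap)
        (TensorProduct.lift σ ∘ₗ
          TensorProduct.map (HB.str ^ (k+2-m)).toLinearMap (HB.str ^ (k+1)).toLinearMap) ∘ₗ
      (TensorProduct.assoc K H H H).toLinearMap)
    (TensorProduct.lift HB.mul ∘ₗ
      TensorProduct.map (HB.str ^ (1-m)).toLinearMap HB.str.toLinearMap)
    (TensorProduct.map (TensorProduct.map HB.comul (LinearMap.id : H →ₗ[K] H))
      (LinearMap.id : H ⊗[K] H →ₗ[K] H ⊗[K] H)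
      (TensorProduct.tensorTensorTensorComm K H H H H (HB.comul l ⊗ₜ[K] HB.comul h)))

/-- `φ^r((a ⊗ h) ⊗ l) = a σ(α^{k+1}(h₁), α^{k+1−m}(l₁)) ⊗ α(h₂)α^{1−m}(l₂)`. -/
def phirElem (HB : HomBialgebraStr K H) (AA : HomAlgebraStr K A)
    (σ : H →ₗ[K] H →ₗ[K] A) (m k : ℤ) (a : A) (h : H) (l : H) : A ⊗[K] H :=
  TensorProduct.map
    ((AA.mul a) ∘ₗ TensorProduct.lift σ ∘ₗ
      TensorProduct.map (HB.str ^ (k+1)).toLinearMap (HB.str ^ (k+1-m)).toLinearMap)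
    (TensorProduct.lift HB.mul ∘ₗ
      TensorProduct.map HB.str.toLinearMap (HB.str ^ (1-m)).toLinearMap)
    (TensorProduct.tensorTensorTensorComm K H H H H (HB.comul h ⊗ₜ[K] HB.comul l))

/-- `(M, μ, φ)` is a left `(H, α, σ̄)`-Hom module. -/
def IsLeftSigmaHomModule (HB : HomBialgebraStr K H)
    (mulM : M →ₗ[K] M →ₗ[K] M) (strM : M →ₗ[K] M)
    (σbar : H →ₗ[K] H →ₗ[K] M) (φ : H →ₗ[K] M →ₗ[K] M) : Prop :=
  (∀ (g l : H) (x : M),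
    φ (HB.str g) (φ l x)
      = TensorProduct.lift mulM
          (TensorProduct.map (strM ∘ₗ TensorProduct.lift σbar)
            ((φ.flip x) ∘ₗ TensorProduct.lift HB.mul)
            (TensorProduct.tensorTensorTensorComm K H H H H (HB.comul g ⊗ₜ[K] HB.comul l))))
  ∧ (∀ x : M, φ HB.one x = strM x)

/-- `(M, μ, φ)` is a right `(H, α, σ̄)`-Hom module. -/
def IsRightSigmaHomModule (HB : HomBialgebraStr K H)
    (mulM : M →ₗ[K] M →ₗ[K] M) (strM : M →ₗ[K] M)
    (σbar : H →ₗ[K] H →ₗ[K] M) (φ : M →ₗ[K] H →ₗ[K] M) : Prop :=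
  (∀ (x : M) (l g : H),
    φ (φ x l) (HB.str g)
      = mulM (strM x)
          (TensorProduct.lift φ
            (TensorProduct.map (TensorProduct.lift σbar) (TensorProduct.lift HB.mul)
              (TensorProduct.tensorTensorTensorComm K H H H H (HB.comul l ⊗ₜ[K] HB.comul g)))))
  ∧ (∀ x : M, φ x HB.one = strM x)

/-- `(M, μ, φ⁺, φ⁻)` is a weak `(H, α)` Hom-bimodule. -/
def IsWeakHomBimodule (HB : HomBialgebraStr K H) (strM : M →ₗ[K] M)
    (φl : H →ₗ[K] M →ₗ[K] M) (φr : M →ₗ[K] H →ₗ[K] M) : Prop :=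
  (∀ x : M, φl HB.one x = strM x) ∧ (∀ x : M, φr x HB.one = strM x) ∧
  (∀ (h : H) (x : M) (g : H), φl (HB.str h) (φr x g) = φr (φl h x) (HB.str g))

/-- A weak `m`-Hom admissible mapping system `C ⇄ A ⇄ H`. -/
structure WeakAdmissibleSystem (HB : HomBialgebraStr K H)
    (CA : HomAlgebraStr K C) (CC : HomCoalgebraStr K C)
    (coact : C →ₗ[K] H ⊗[K] C) (m : ℤ) (AB : HomBialgebraStr K A)
    (j : C →ₗ[K] A) (p : A →ₗ[K] C) (i : H →ₗ[K] A) (π : A →ₗ[K] H) : Prop where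
  c_str_eq : CA.str = CC.str
  p_j : ∀ c : C, p (j c) = c
  pi_i : ∀ h : H, π (i h) = h
  pi_mul : ∀ a b : A, π (AB.mul a b) = HB.mul (π a) (π b)
  pi_one : π AB.one = HB.one
  pi_str : ∀ a : A, π (AB.str a) = HB.str (π a)
  pi_comul : ∀ a : A, TensorProduct.map π π (AB.comul a) = HB.comul (π a)
  pi_counit : ∀ a : A, HB.counit (π a) = AB.counit a
  i_one : i HB.one = AB.one
  i_str : ∀ h : H, i (HB.str h) = AB.str (i h)
  i_comul : ∀ h : H, TensorProduct.map i i (HB.comul h) = AB.comul (i h)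
  i_counit : ∀ h : H, AB.counit (i h) = HB.counit h
  p_str : ∀ a : A, p (AB.str a) = CC.str (p a)
  p_comul : ∀ a : A, TensorProduct.map p p (AB.comul a) = CC.comul (p a)
  p_counit : ∀ a : A, CC.counit (p a) = AB.counit a
  j_mul : ∀ c d : C, j (CA.mul c d) = AB.mul (j c) (j d)
  j_one : j CA.one = AB.one
  j_str : ∀ c : C, j (CC.str c) = AB.str (j c)
  p_left_act : ∀ (h : H) (a : A),
    p (AB.mul (i ((HB.str ^ (-m)) h)) a) = HB.counit h • CC.str (p a)
  p_right_act : ∀ (a : A) (h : H),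
    p (AB.mul a (i ((HB.str ^ (-m)) h))) = HB.counit h • CC.str (p a)
  sigma_mod : ∃ σbar : H →ₗ[K] H →ₗ[K] A,
    IsLeftSigmaHomModule HB AB.mul AB.str.toLinearMap σbar
        (AB.mul ∘ₗ i ∘ₗ (HB.str ^ (-m)).toLinearMap)
      ∧ IsRightSigmaHomModule HB AB.mul AB.str.toLinearMap σbar
        (AB.mul.compl₂ (i ∘ₗ (HB.str ^ (-m)).toLinearMap))
  sub_l : ∀ c : C, ∃ y : H ⊗[K] C,
    TensorProduct.map ((HB.str ^ (-m)).toLinearMap ∘ₗ π) (LinearMap.id : A →ₗ[K] A)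
        (AB.comul (j c))
      = TensorProduct.map (LinearMap.id : H →ₗ[K] H) j y
  sub_r : ∀ c : C, ∃ z : C ⊗[K] H,
    TensorProduct.map (LinearMap.id : A →ₗ[K] A) ((HB.str ^ (-m)).toLinearMap ∘ₗ π)
        (AB.comul (j c))
      = TensorProduct.map j (LinearMap.id : H →ₗ[K] H) z
  p_col : ∀ c : C,
    TensorProduct.map (LinearMap.id : H →ₗ[K] H) p
        (TensorProduct.map ((HB.str ^ (-m)).toLinearMap ∘ₗ π) (LinearMap.id : A →ₗ[K] A)
          (AB.comul (j c)))
      = coact c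
  p_cor : ∀ c : C,
    TensorProduct.map p (LinearMap.id : H →ₗ[K] H)
        (TensorProduct.map (LinearMap.id : A →ₗ[K] A) ((HB.str ^ (-m)).toLinearMap ∘ₗ π)
          (AB.comul (j c)))
      = CC.str.symm c ⊗ₜ[K] HB.one
  split : ∀ a : A,
    TensorProduct.lift AB.mul (TensorProduct.map (j ∘ₗ p) (i ∘ₗ π) (AB.comul a)) = a

/-- The map `f : C ♯ H → A`, `c ⊗ h ↦ γ⁻¹(j(c)i(h))`. -/
def admF (AB : HomBialgebraStr K A) (j : C →ₗ[K] A) (i : H →ₗ[K] A) :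
    C ⊗[K] H →ₗ[K] A :=
  AB.str.symm.toLinearMap ∘ₗ TensorProduct.lift ((AB.mul ∘ₗ j).compl₂ i)

/-- The map `g : A → C ♯ H`, `a ↦ β(p(a₁)) ⊗ α(π(a₂))`. -/
def admG (HB : HomBialgebraStr K H) (CC : HomCoalgebraStr K C)
    (AB : HomBialgebraStr K A) (p : A →ₗ[K] C) (π : A →ₗ[K] H) :
    A →ₗ[K] C ⊗[K] H :=
  TensorProduct.map (CC.str.toLinearMap ∘ₗ p) (HB.str.toLinearMap ∘ₗ π) ∘ₗ AB.comul

end Defs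

/-!
Write `g = (β ∘ p ⊗ α ∘ π) ∘ Δ`. Both `Δ(g a)` and `(g ⊗ g)(Δ a)` arise from the fourfold coproduct
`a₁₁ ⊗ (a₁₂ ⊗ a₂₁) ⊗ a₂₂` by applying `β ∘ p` to the first leg, `α ∘ π` to the last one, and a map
`M` to the middle pair: `M(x ⊗ y) = α^{m+1}(p(x)₍₋₁₎) π(y) ⊗ β²(p(x)₍₀₎)` for `Δ(g a)`, and
`M = α ∘ π ⊗ β ∘ p` for `(g ⊗ g)(Δ a)`. Hom-coassociativity makes the middle pair a coproduct
`Δ(b)`, so it suffices that the two maps agree on `Δ(b)`. For this write `b = j(p(b₁)) i(π(b₂))`: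
`π` turns right multiplication by `i(h)` into multiplication by `h`, `p` turns it into `ε(h) β`, and
since `p` is a comodule map on `j(C)`, `π ⊗ p` sends `Δ(j c)` to the coaction of `c`.
-/

open TensorProduct

lemma TensorProduct.map_map_tensorTensorTensorAssoc_symm {K M P Q : Type*} [Field K]
    [AddCommGroup M] [Module K M] [AddCommGroup P] [Module K P] [AddCommGroup Q] [Module K Q]
    (f : M →ₗ[K] P) (g : M →ₗ[K] Q) (X : (M ⊗[K] M) ⊗[K] (M ⊗[K] M)) :
    map (map f g) (map f g) X
      = (tensorTensorTensorAssoc K P Q P Q).symm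
          (map (map f (map g f)) g (tensorTensorTensorAssoc K M M M M X)) := by
  have h : map (map f g) (map f g)
      = (tensorTensorTensorAssoc K P Q P Q).symm.toLinearMap ∘ₗ map (map f (map g f)) g
          ∘ₗ (tensorTensorTensorAssoc K M M M M).toLinearMap := by
    ext
    simp
  exact LinearMap.congr_fun h X

namespace HomCoalgebraStr

variable {K C : Type*} [Field K] [AddCommGroup C] [Module K C] (CC : HomCoalgebraStr K C)

lemma comul_comp_str :
    CC.comul ∘ₗ CC.str.toLinearMap = map CC.str.toLinearMap CC.str.toLinearMap ∘ₗ CC.comul :=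
  LinearMap.ext CC.comul_str

lemma counit_str_symm (c : C) : CC.counit (CC.str.symm c) = CC.counit c := by
  rw [← CC.counit_str, LinearEquiv.apply_symm_apply]

lemma lid_map_counit_counit_comul (c : C) :
    TensorProduct.lid K K (map CC.counit CC.counit (CC.comul c)) = CC.counit c := by
  have h : (TensorProduct.lid K K).toLinearMap ∘ₗ map CC.counit CC.counit
      = CC.counit ∘ₗ (TensorProduct.lid K C).toLinearMap ∘ₗ map CC.counit LinearMap.id := by
    ext
    simp
  rw [← CC.counit_str_symm, ← CC.counit_comul_left]
  exact LinearMap.congr_fun h (CC.comul c)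

lemma assoc_map_comul_str_comul (c : C) :
    TensorProduct.assoc K C C C (map (CC.comul ∘ₗ CC.str.toLinearMap) LinearMap.id (CC.comul c))
      = map LinearMap.id (CC.comul ∘ₗ CC.str.toLinearMap) (CC.comul c) := by
  have h := congrArg (map CC.str.toLinearMap (map CC.str.toLinearMap CC.str.toLinearMap))
    (CC.hom_coassoc c)
  rw [map_map, map_map_assoc, map_map, ← comul_comp_str, LinearEquiv.comp_symm] at h
  exact h.symm

lemma tensorTensorTensorAssoc_map_comul_comul (c : C) :
    tensorTensorTensorAssoc K C C C C (map CC.comul CC.comul (CC.comul c))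
      = (TensorProduct.assoc K C (C ⊗[K] C) C).symm
          (map CC.str.symm.toLinearMap
            (map (CC.comul ∘ₗ CC.str.toLinearMap) LinearMap.id ∘ₗ CC.comul) (CC.comul c)) := by
  have hregroup : ∀ (x y : C) (w : C ⊗[K] C),
      tensorTensorTensorAssoc K C C C C ((x ⊗ₜ y) ⊗ₜ w)
        = (TensorProduct.assoc K C (C ⊗[K] C) C).symm
            (x ⊗ₜ (TensorProduct.assoc K C C C).symm (y ⊗ₜ w)) := by
    intro x y w
    induction w using TensorProduct.induction_on with
    | zero => simp
    | tmul => simp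
    | add w w' hw hw' => simp only [tmul_add, map_add, hw, hw']
  have hmiddle : (TensorProduct.assoc K C C C).symm.toLinearMap
        ∘ₗ map LinearMap.id (CC.comul ∘ₗ CC.str.toLinearMap) ∘ₗ CC.comul
      = map (CC.comul ∘ₗ CC.str.toLinearMap) LinearMap.id ∘ₗ CC.comul := by
    ext c
    simp [← CC.assoc_map_comul_str_comul]
  have hcomul : map CC.comul CC.comul (CC.comul c)
      = map LinearMap.id (CC.comul ∘ₗ CC.str.toLinearMap)
          ((TensorProduct.assoc K C C C).symm
            (map CC.str.symm.toLinearMap CC.comul (CC.comul c))) := by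
    rw [CC.hom_coassoc, LinearEquiv.symm_apply_apply, map_map, LinearMap.comp_assoc,
      LinearEquiv.comp_symm, LinearMap.comp_id, LinearMap.id_comp]
  rw [hcomul, ← hmiddle, ← LinearMap.comp_assoc, ← LinearMap.id_comp CC.str.symm.toLinearMap,
    ← map_map, LinearMap.id_comp]
  induction map CC.str.symm.toLinearMap CC.comul (CC.comul c) using TensorProduct.induction_on with
  | zero => simp
  | add t t' ht ht' => simp only [map_add, ht, ht']
  | tmul x v =>
    induction v using TensorProduct.induction_on with
    | zero => simp
    | add v v' hv hv' => simp only [tmul_add, map_add, hv, hv']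
    | tmul y z => simp [hregroup]

lemma map_map_tensorTensorTensorAssoc_comul_comul_congr {P Q N : Type*}
    [AddCommGroup P] [Module K P] [AddCommGroup Q] [Module K Q] [AddCommGroup N] [Module K N]
    (f : C →ₗ[K] P) (g : C →ₗ[K] Q) {M₁ M₂ : C ⊗[K] C →ₗ[K] N}
    (hM : M₁ ∘ₗ CC.comul = M₂ ∘ₗ CC.comul) (c : C) :
    map (map f M₁) g (tensorTensorTensorAssoc K C C C C (map CC.comul CC.comul (CC.comul c)))
      = map (map f M₂) g
          (tensorTensorTensorAssoc K C C C C (map CC.comul CC.comul (CC.comul c))) := by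
  simp only [tensorTensorTensorAssoc_map_comul_comul, map_map_assoc_symm, map_map,
    ← LinearMap.comp_assoc, ← map_comp, LinearMap.comp_id, hM]

end HomCoalgebraStr

def HomBialgebraStr.toHomCoalgebraStr {K H : Type*} [Field K] [AddCommGroup H] [Module K H]
    (HB : HomBialgebraStr K H) : HomCoalgebraStr K H where
  comul := HB.comul
  counit := HB.counit
  str := HB.str
  hom_coassoc := HB.hom_coassoc
  comul_str := HB.comul_str
  counit_comul_left := HB.counit_comul_left
  counit_comul_right := HB.counit_comul_right
  counit_str := HB.counit_str

lemma HomBialgebraStr.counit_zpow_str {K H : Type*} [Field K] [AddCommGroup H] [Module K H]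
    (HB : HomBialgebraStr K H) (n : ℤ) (h : H) : HB.counit ((HB.str ^ n) h) = HB.counit h := by
  induction n using Int.induction_on generalizing h with
  | zero => rfl
  | succ n ih => rw [zpow_add_one, LinearEquiv.mul_apply, ih, HB.counit_str]
  | pred n ih =>
    rw [zpow_sub_one, LinearEquiv.mul_apply, ih, LinearEquiv.coe_inv]
    exact HB.toHomCoalgebraStr.counit_str_symm h

section TwistMul

variable {K C H : Type*} [Field K] [AddCommGroup C] [Module K C] [AddCommGroup H] [Module K H]
  (HB : HomBialgebraStr K H) (CC : HomCoalgebraStr K C)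

def twistMul (n : ℤ) : (H ⊗[K] C) ⊗[K] H →ₗ[K] H ⊗[K] C :=
  map (lift HB.mul ∘ₗ map (HB.str ^ n).toLinearMap LinearMap.id)
      (CC.str.toLinearMap ∘ₗ CC.str.toLinearMap)
    ∘ₗ (rightComm K H C H).toLinearMap

@[simp]
lemma twistMul_tmul (n : ℤ) (u : H) (v : C) (h : H) :
    twistMul HB CC n ((u ⊗ₜ v) ⊗ₜ h) = HB.mul ((HB.str ^ n) u) h ⊗ₜ CC.str (CC.str v) := by
  simp [twistMul]

lemma twistMul_map_zpow_tmul (n k : ℤ) (W : H ⊗[K] C) (h : H) :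
    twistMul HB CC n (map (HB.str ^ k).toLinearMap LinearMap.id W ⊗ₜ h)
      = twistMul HB CC (n + k) (W ⊗ₜ h) := by
  induction W using TensorProduct.induction_on with
  | zero => simp
  | add W W' hW hW' => simp only [map_add, add_tmul, hW, hW']
  | tmul u v => simp [zpow_add, LinearEquiv.mul_apply]

end TwistMul

section Admissible

variable {K C H A : Type*} [Field K] [AddCommGroup C] [Module K C] [AddCommGroup H] [Module K H]
  [AddCommGroup A] [Module K A] {HB : HomBialgebraStr K H} {CA : HomAlgebraStr K C}
  {CC : HomCoalgebraStr K C} {coact : C →ₗ[K] H ⊗[K] C} {m : ℤ} {AB : HomBialgebraStr K A}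
  {j : C →ₗ[K] A} {p : A →ₗ[K] C} {i : H →ₗ[K] A} {π : A →ₗ[K] H}

lemma map_admG_admG_comul (a : A) :
    map (admG HB CC AB p π) (admG HB CC AB p π) (AB.comul a)
      = (tensorTensorTensorAssoc K C H C H).symm
          (map (map (CC.str.toLinearMap ∘ₗ p)
              (map (HB.str.toLinearMap ∘ₗ π) (CC.str.toLinearMap ∘ₗ p)))
            (HB.str.toLinearMap ∘ₗ π)
            (tensorTensorTensorAssoc K A A A A (map AB.comul AB.comul (AB.comul a)))) := by
  rw [admG, TensorProduct.map_comp, LinearMap.comp_apply,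
    TensorProduct.map_map_tensorTensorTensorAssoc_symm]

namespace WeakAdmissibleSystem

lemma p_mul_i (sys : WeakAdmissibleSystem HB CA CC coact m AB j p i π) (a : A) (h : H) :
    p (AB.mul a (i h)) = HB.counit h • CC.str (p a) := by
  simpa [HB.counit_zpow_str] using sys.p_right_act a ((HB.str ^ m) h)

lemma map_pi_p_comul_j (sys : WeakAdmissibleSystem HB CA CC coact m AB j p i π) (c : C) :
    map π p (AB.comul (j c)) = map (HB.str ^ m).toLinearMap LinearMap.id (coact c) := by
  rw [← sys.p_col, map_map, map_map]
  congr 1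
  ext
  simp

lemma map_str_pi_str_p_comul_mul_i (sys : WeakAdmissibleSystem HB CA CC coact m AB j p i π)
    (a : A) (h : H) :
    map (HB.str.toLinearMap ∘ₗ π) (CC.str.toLinearMap ∘ₗ p) (AB.comul (AB.mul a (i h)))
      = twistMul HB CC 1 (map π p (AB.comul a) ⊗ₜ h) := by
  have hmul_i : ∀ (X : A ⊗[K] A) (Y : H ⊗[K] H),
      map (HB.str.toLinearMap ∘ₗ π) (CC.str.toLinearMap ∘ₗ p)
          (tensorSquareMul AB.mul X (map i i Y))
        = twistMul HB CC 1
            (map π p X ⊗ₜ HB.str (TensorProduct.rid K H (map LinearMap.id HB.counit Y))) := by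
    intro X Y
    induction X using TensorProduct.induction_on with
    | zero => simp
    | add X X' hX hX' => simp only [map_add, LinearMap.add_apply, add_tmul, hX, hX']
    | tmul x₁ x₂ =>
      induction Y using TensorProduct.induction_on with
      | zero => simp
      | add Y Y' hY hY' => simp only [map_add, tmul_add, hY, hY']
      | tmul h₁ h₂ => simp [tensorSquareMul, sys.p_mul_i, sys.pi_mul, sys.pi_i, HB.str_mul]
  rw [AB.comul_mul, ← sys.i_comul, hmul_i, HB.counit_comul_right, LinearEquiv.apply_symm_apply]

lemma map_str_pi_str_p_comul (sys : WeakAdmissibleSystem HB CA CC coact m AB j p i π) (b : A) :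
    map (HB.str.toLinearMap ∘ₗ π) (CC.str.toLinearMap ∘ₗ p) (AB.comul b)
      = twistMul HB CC (m + 1) (map (coact ∘ₗ p) π (AB.comul b)) := by
  have hsplit : map (HB.str.toLinearMap ∘ₗ π) (CC.str.toLinearMap ∘ₗ p) ∘ₗ AB.comul
        ∘ₗ lift AB.mul ∘ₗ map (j ∘ₗ p) (i ∘ₗ π)
      = twistMul HB CC (m + 1) ∘ₗ map (coact ∘ₗ p) π := by
    ext x y
    simp [sys.map_str_pi_str_p_comul_mul_i, sys.map_pi_p_comul_j, twistMul_map_zpow_tmul,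
      add_comm]
  conv_lhs => rw [← sys.split b]
  exact LinearMap.congr_fun hsplit (AB.comul b)

lemma comul_str_p (sys : WeakAdmissibleSystem HB CA CC coact m AB j p i π) (a : A) :
    CC.comul (CC.str (p a))
      = map (CC.str.toLinearMap ∘ₗ p) (CC.str.toLinearMap ∘ₗ p) (AB.comul a) := by
  rw [CC.comul_str, ← sys.p_comul, map_map]

lemma comul_str_pi (sys : WeakAdmissibleSystem HB CA CC coact m AB j p i π) (a : A) :
    HB.comul (HB.str (π a))
      = map (HB.str.toLinearMap ∘ₗ π) (HB.str.toLinearMap ∘ₗ π) (AB.comul a) := by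
  rw [HB.comul_str, ← sys.pi_comul, map_map]

lemma comul_str_p_tmul_str_pi (sys : WeakAdmissibleSystem HB CA CC coact m AB j p i π)
    {act : H →ₗ[K] C →ₗ[K] C} (hcc : IsComoduleCoalgebra HB CC coact)
    {σ : H →ₗ[K] H →ₗ[K] C} {k : ℤ} {B : HomBialgebraStr K (C ⊗[K] H)}
    (hB : IsRadfordBiproduct HB CA CC act coact σ m k B) (x y : A) :
    B.comul (CC.str (p x) ⊗ₜ HB.str (π y))
      = (tensorTensorTensorAssoc K C H C H).symm
          (map (map (CC.str.toLinearMap ∘ₗ p) (twistMul HB CC (m + 1) ∘ₗ map (coact ∘ₗ p) π))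
            (HB.str.toLinearMap ∘ₗ π)
            (tensorTensorTensorAssoc K A A A A (AB.comul x ⊗ₜ AB.comul y))) := by
  rw [hB.comul_def, scComulElem, sys.comul_str_p, sys.comul_str_pi]
  induction AB.comul x using TensorProduct.induction_on with
  | zero => simp
  | add X X' hX hX' => simp only [map_add, add_tmul, hX, hX']
  | tmul x₁ x₂ =>
    induction AB.comul y using TensorProduct.induction_on with
    | zero => simp
    | add Y Y' hY hY' => simp only [map_add, tmul_add, hY, hY']
    | tmul y₁ y₂ =>
      simp only [map_tmul, LinearMap.comp_apply, LinearEquiv.coe_coe, LinearMap.id_coe, id_eq,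
        hcc.coact_str, tensorTensorTensorAssoc_tmul]
      induction coact (p x₂) using TensorProduct.induction_on with
      | zero => simp
      | add W W' hW hW' => simp only [map_add, tmul_add, add_tmul, hW, hW']
      | tmul u v => simp [zpow_add_one]

lemma comul_admG (sys : WeakAdmissibleSystem HB CA CC coact m AB j p i π)
    {act : H →ₗ[K] C →ₗ[K] C} (hcc : IsComoduleCoalgebra HB CC coact)
    {σ : H →ₗ[K] H →ₗ[K] C} {k : ℤ} {B : HomBialgebraStr K (C ⊗[K] H)}
    (hB : IsRadfordBiproduct HB CA CC act coact σ m k B) (a : A) :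
    B.comul (admG HB CC AB p π a)
      = (tensorTensorTensorAssoc K C H C H).symm
          (map (map (CC.str.toLinearMap ∘ₗ p) (twistMul HB CC (m + 1) ∘ₗ map (coact ∘ₗ p) π))
            (HB.str.toLinearMap ∘ₗ π)
            (tensorTensorTensorAssoc K A A A A (map AB.comul AB.comul (AB.comul a)))) := by
  have h : B.comul ∘ₗ map (CC.str.toLinearMap ∘ₗ p) (HB.str.toLinearMap ∘ₗ π)
      = (tensorTensorTensorAssoc K C H C H).symm.toLinearMap
          ∘ₗ map (map (CC.str.toLinearMap ∘ₗ p) (twistMul HB CC (m + 1) ∘ₗ map (coact ∘ₗ p) π))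
            (HB.str.toLinearMap ∘ₗ π)
          ∘ₗ (tensorTensorTensorAssoc K A A A A).toLinearMap ∘ₗ map AB.comul AB.comul := by
    ext x y
    exact sys.comul_str_p_tmul_str_pi hcc hB x y
  exact LinearMap.congr_fun h (AB.comul a)

lemma counit_admG (sys : WeakAdmissibleSystem HB CA CC coact m AB j p i π)
    {act : H →ₗ[K] C →ₗ[K] C} {σ : H →ₗ[K] H →ₗ[K] C} {k : ℤ}
    {B : HomBialgebraStr K (C ⊗[K] H)} (hB : IsRadfordBiproduct HB CA CC act coact σ m k B)
    (a : A) : B.counit (admG HB CC AB p π a) = AB.counit a := by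
  have h : B.counit ∘ₗ map (CC.str.toLinearMap ∘ₗ p) (HB.str.toLinearMap ∘ₗ π)
      = (TensorProduct.lid K K).toLinearMap ∘ₗ map AB.counit AB.counit := by
    ext
    simp [hB.counit_def, CC.counit_str, HB.counit_str, sys.p_counit, sys.pi_counit]
  exact (LinearMap.congr_fun h (AB.comul a)).trans
    (AB.toHomCoalgebraStr.lid_map_counit_counit_comul a)

lemma admG_str (sys : WeakAdmissibleSystem HB CA CC coact m AB j p i π) (a : A) :
    admG HB CC AB p π (AB.str a)
      = map CC.str.toLinearMap HB.str.toLinearMap (admG HB CC AB p π a) := by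
  simp only [admG, LinearMap.comp_apply, AB.comul_str, map_map]
  congr 1
  ext
  simp [sys.p_str, sys.pi_str]

end WeakAdmissibleSystem

end Admissible

theorem admissible_system_g_coalgebra_map_general
    {K C H A : Type*} [Field K] [AddCommGroup C] [Module K C] [AddCommGroup H] [Module K H]
    [AddCommGroup A] [Module K A]
    (HB : HomBialgebraStr K H) (CA : HomAlgebraStr K C) (CC : HomCoalgebraStr K C)
    (act : H →ₗ[K] C →ₗ[K] C)
    (coact : C →ₗ[K] H ⊗[K] C) (hcc : IsComoduleCoalgebra HB CC coact)
    (σ : H →ₗ[K] H →ₗ[K] C) (m k : ℤ)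
    (B : HomBialgebraStr K (C ⊗[K] H))
    (hB : IsRadfordBiproduct HB CA CC act coact σ m k B)
    (AB : HomBialgebraStr K A)
    (j : C →ₗ[K] A) (p : A →ₗ[K] C) (i : H →ₗ[K] A) (π : A →ₗ[K] H)
    (sys : WeakAdmissibleSystem HB CA CC coact m AB j p i π) :
    (∀ a : A,
      B.comul (admG HB CC AB p π a)
        = TensorProduct.map (admG HB CC AB p π) (admG HB CC AB p π) (AB.comul a))
    ∧ (∀ a : A, B.counit (admG HB CC AB p π a) = AB.counit a)
    ∧ (∀ a : A,
      admG HB CC AB p π (AB.str a)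
        = TensorProduct.map CC.str.toLinearMap HB.str.toLinearMap (admG HB CC AB p π a)) := by
  refine ⟨fun a => ?_, sys.counit_admG hB, sys.admG_str⟩
  have hmiddle : twistMul HB CC (m + 1) ∘ₗ map (coact ∘ₗ p) π ∘ₗ AB.comul
      = map (HB.str.toLinearMap ∘ₗ π) (CC.str.toLinearMap ∘ₗ p) ∘ₗ AB.comul :=
    LinearMap.ext fun b => (sys.map_str_pi_str_p_comul b).symm
  rw [sys.comul_admG hcc hB, map_admG_admG_comul]
  exact congrArg _
    (AB.toHomCoalgebraStr.map_map_tensorTensorTensorAssoc_comul_comul_congr _ _ hmiddle a)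

/-- In the proof of Theorem 4.11: `g` is a homomorphism of monoidal Hom-coalgebras. -/
theorem admissible_system_g_coalgebra_map
    {K C H A : Type*} [Field K] [AddCommGroup C] [Module K C] [AddCommGroup H] [Module K H]
    [AddCommGroup A] [Module K A]
    (HB : HomBialgebraStr K H) (CA : HomAlgebraStr K C) (CC : HomCoalgebraStr K C)
    (act : H →ₗ[K] C →ₗ[K] C) (hact : IsWeakModuleAlgebra HB CA act)
    (coact : C →ₗ[K] H ⊗[K] C) (hcc : IsComoduleCoalgebra HB CC coact)
    (σ : H →ₗ[K] H →ₗ[K] C) (m k : ℤ)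
    (B : HomBialgebraStr K (C ⊗[K] H))
    (hB : IsRadfordBiproduct HB CA CC act coact σ m k B)
    (AB : HomBialgebraStr K A)
    (j : C →ₗ[K] A) (p : A →ₗ[K] C) (i : H →ₗ[K] A) (π : A →ₗ[K] H)
    (sys : WeakAdmissibleSystem HB CA CC coact m AB j p i π) :
    (∀ a : A,
      B.comul (admG HB CC AB p π a)
        = TensorProduct.map (admG HB CC AB p π) (admG HB CC AB p π) (AB.comul a))
    ∧ (∀ a : A, B.counit (admG HB CC AB p π a) = AB.counit a)
    ∧ (∀ a : A,
      admG HB CC AB p π (AB.str a)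
        = TensorProduct.map CC.str.toLinearMap HB.str.toLinearMap (admG HB CC AB p π a)) :=
  admissible_system_g_coalgebra_map_general HB CA CC act coact hcc σ m k B hB AB j p i π sys
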